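/- arXiv:2201.07299 — 2 statements merged into one kernel-verified Lean document; each statement's English description precedes it below -/
import Mathlib

section
/- Let R = F2[U] and let C1, C2 be chain complexes of R-modules. Suppose f : C1 → C2 is a chain isomorphism (or more generally a quasi-isomorphism), and τ1 : C1 → C1, τ2 : C2 → C2 are chain maps such that f ∘ τ1 is chain homotopic to τ2 ∘ f. Then the induced map on mapping cones Cone(Q·(id + τ1) : C1 → Q·C1) → Cone(Q·(id + τ2) : C2 → Q·C2), defined using f on both factors together with the chain homotopy on the off-diagonal, is a quasi-isomorphism. -/
open Polynomial

/-- The ring `R = F2[U]`. -/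
abbrev R2 : Type := Polynomial (ZMod 2)

/-- `f` is a quasi-isomorphism between the chain complexes `(M, dM)` and `(N, dN)`:
the induced map on homology is surjective and injective (stated elementwise). -/
def IsQuasiIso {M N : Type} [AddCommGroup M] [Module R2 M] [AddCommGroup N] [Module R2 N]
    (dM : M →ₗ[R2] M) (dN : N →ₗ[R2] N) (f : M →ₗ[R2] N) : Prop :=
  (∀ y : N, dN y = 0 → ∃ x : M, dM x = 0 ∧ ∃ w : N, y + f x = dN w) ∧
  (∀ x : M, dM x = 0 → (∃ w : N, f x = dN w) → ∃ v : M, x = dM v)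

/-- The mapping cone of `Q·(id + τ) : C → Q·C`, where `Q` is a formal variable with
`Q² = 0`: the underlying module is `C ⊕ Q·C[-1]` and the differential is
`(x, Qy) ↦ (dx, Q((id + τ)x + dy))` (coefficients have characteristic 2, so signs
are irrelevant). -/
noncomputable def coneD {M : Type} [AddCommGroup M] [Module R2 M] (d τ : M →ₗ[R2] M) :
    M × M →ₗ[R2] M × M :=
  LinearMap.prod (d ∘ₗ LinearMap.fst R2 M M)
    ((LinearMap.id + τ) ∘ₗ LinearMap.fst R2 M M + d ∘ₗ LinearMap.snd R2 M M)

/-!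
The cone of `g : A → A'` is an extension of `A` (shifted) by its subcomplex `A'`, and the map
`(x, y) ↦ (f x, f' y + H x)` respects this extension; when `f` and `f'` are quasi-isomorphisms,
so is the cone map, by the five lemma for the long exact homology sequences. This diagram chase
works in any characteristic for the sign-free cone of a map anticommuting with the
differentials; characteristic 2 enters only to see that `id + τ` is such a map and that the
homotopy `f ∘ τ₁ + τ₂ ∘ f = dH + Hd` has the shape required of `H`.
-/

/-- With `g ∘ dA = -(dA' ∘ g)` no signs are needed: this is `coneD d τ` for `g = id + τ`. -/
noncomputable def coneDiff {A A' : Type} [AddCommGroup A] [Module R2 A] [AddCommGroup A']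
    [Module R2 A'] (dA : A →ₗ[R2] A) (dA' : A' →ₗ[R2] A') (g : A →ₗ[R2] A') :
    A × A' →ₗ[R2] A × A' :=
  LinearMap.prod (dA ∘ₗ LinearMap.fst R2 A A')
    (g ∘ₗ LinearMap.fst R2 A A' + dA' ∘ₗ LinearMap.snd R2 A A')

noncomputable def coneMap {A A' B B' : Type} [AddCommGroup A] [Module R2 A] [AddCommGroup A']
    [Module R2 A'] [AddCommGroup B] [Module R2 B] [AddCommGroup B'] [Module R2 B']
    (f : A →ₗ[R2] B) (f' : A' →ₗ[R2] B') (H : A →ₗ[R2] B') : A × A' →ₗ[R2] B × B' :=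
  LinearMap.prod (f ∘ₗ LinearMap.fst R2 A A')
    (f' ∘ₗ LinearMap.snd R2 A A' + H ∘ₗ LinearMap.fst R2 A A')

section Cone

variable {A A' B B' : Type} [AddCommGroup A] [Module R2 A] [AddCommGroup A'] [Module R2 A']
  [AddCommGroup B] [Module R2 B] [AddCommGroup B'] [Module R2 B']
  {dA : A →ₗ[R2] A} {dA' : A' →ₗ[R2] A'} {dB : B →ₗ[R2] B} {dB' : B' →ₗ[R2] B'}
  {g₁ : A →ₗ[R2] A'} {g₂ : B →ₗ[R2] B'} {f : A →ₗ[R2] B} {f' : A' →ₗ[R2] B'} {H : A →ₗ[R2] B'}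

@[simp]
theorem coneDiff_apply (x : A) (y : A') : coneDiff dA dA' g₁ (x, y) = (dA x, g₁ x + dA' y) :=
  rfl

@[simp]
theorem coneMap_apply (x : A) (y : A') : coneMap f f' H (x, y) = (f x, f' y + H x) :=
  rfl

theorem coneMap_surjective_on_homology (hg₁ : ∀ x, g₁ (dA x) = -dA' (g₁ x))
    (hg₂ : ∀ y, g₂ (dB y) = -dB' (g₂ y)) (hf' : ∀ x, f' (dA' x) = dB' (f' x))
    (hH : ∀ x, f' (g₁ x) + H (dA x) = g₂ (f x) + dB' (H x))
    (hfq : IsQuasiIso dA dB f) (hf'q : IsQuasiIso dA' dB' f')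
    {y₁ : B} {y₂ : B'} (hy₁ : dB y₁ = 0) (hy₂ : g₂ y₁ + dB' y₂ = 0) :
    ∃ x₁ x₂, (dA x₁ = 0 ∧ g₁ x₁ + dA' x₂ = 0) ∧
      ∃ w₁ w₂, y₁ + f x₁ = dB w₁ ∧ y₂ + (f' x₂ + H x₁) = g₂ w₁ + dB' w₂ := by
  obtain ⟨x₁, hx₁, w₁, hw₁⟩ := hfq.1 y₁ hy₁
  have hHx₁ : f' (g₁ x₁) = g₂ (f x₁) + dB' (H x₁) := by simpa [hx₁] using hH x₁
  have hgw₁ : g₂ y₁ + g₂ (f x₁) = g₂ (dB w₁) := by simpa using congrArg g₂ hw₁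
  have hg₁x₁ : dA' (g₁ x₁) = 0 := by rw [← neg_eq_zero, ← hg₁, hx₁, map_zero]
  have hbd : f' (g₁ x₁) = dB' (y₂ + H x₁ - g₂ w₁) := by
    rw [map_sub, map_add]
    linear_combination (norm := module) hHx₁ + hgw₁ + hg₂ w₁ - hy₂
  obtain ⟨v, hv⟩ := hf'q.2 (g₁ x₁) hg₁x₁ ⟨_, hbd⟩
  rw [hv] at hHx₁
  have hz : dB' (y₂ - f' v + H x₁ - g₂ w₁) = 0 := by
    simp only [map_add, map_sub]
    linear_combination (norm := module) hf' v - hHx₁ + hy₂ - hgw₁ - hg₂ w₁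
  obtain ⟨u, hu, w₂, hw₂⟩ := hf'q.1 _ hz
  refine ⟨x₁, u - v, ⟨hx₁, ?_⟩, w₁, w₂, hw₁, ?_⟩
  · rw [map_sub, hu, hv, zero_sub, add_neg_cancel]
  · rw [map_sub]
    linear_combination (norm := module) hw₂

theorem coneMap_injective_on_homology (hg₁ : ∀ x, g₁ (dA x) = -dA' (g₁ x))
    (hg₂ : ∀ y, g₂ (dB y) = -dB' (g₂ y)) (hf : ∀ x, f (dA x) = dB (f x))
    (hH : ∀ x, f' (g₁ x) + H (dA x) = g₂ (f x) + dB' (H x))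
    (hfq : IsQuasiIso dA dB f) (hf'q : IsQuasiIso dA' dB' f')
    {x₁ : A} {x₂ : A'} (hx₁ : dA x₁ = 0) (hx₂ : g₁ x₁ + dA' x₂ = 0)
    {w₁ : B} {w₂ : B'} (hw₁ : f x₁ = dB w₁) (hw₂ : f' x₂ + H x₁ = g₂ w₁ + dB' w₂) :
    ∃ v₁ v₂, x₁ = dA v₁ ∧ x₂ = g₁ v₁ + dA' v₂ := by
  obtain ⟨v₀, hv₀⟩ := hfq.2 x₁ hx₁ ⟨w₁, hw₁⟩
  have hw₁v₀ : dB (w₁ - f v₀) = 0 := by rw [map_sub, ← hf, ← hv₀, hw₁, sub_self]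
  obtain ⟨p, hp, q, hq⟩ := hfq.1 _ hw₁v₀
  have hv₁ : x₁ = dA (v₀ - p) := by rw [map_sub, hp, sub_zero, hv₀]
  have hfv₁ : f (v₀ - p) = w₁ - dB q := by rw [map_sub, ← hq]; abel
  have hHv₁ : f' (g₁ (v₀ - p)) + H x₁ = g₂ w₁ - g₂ (dB q) + dB' (H (v₀ - p)) := by
    simpa [← hv₁, hfv₁] using hH (v₀ - p)
  rw [hv₁] at hx₂
  have hcycle : dA' (x₂ - g₁ (v₀ - p)) = 0 := by
    rw [map_sub]
    linear_combination (norm := module) hx₂ - hg₁ (v₀ - p)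
  have hbd : f' (x₂ - g₁ (v₀ - p)) = dB' (w₂ - g₂ q - H (v₀ - p)) := by
    rw [map_sub f', map_sub dB', map_sub dB']
    linear_combination (norm := module) hw₂ - hHv₁ + hg₂ q
  obtain ⟨v₂, hv₂⟩ := hf'q.2 _ hcycle ⟨_, hbd⟩
  exact ⟨v₀ - p, v₂, hv₁, by rw [← hv₂, add_sub_cancel]⟩

theorem isQuasiIso_coneMap (hg₁ : ∀ x, g₁ (dA x) = -dA' (g₁ x))
    (hg₂ : ∀ y, g₂ (dB y) = -dB' (g₂ y)) (hf : ∀ x, f (dA x) = dB (f x))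
    (hf' : ∀ x, f' (dA' x) = dB' (f' x))
    (hH : ∀ x, f' (g₁ x) + H (dA x) = g₂ (f x) + dB' (H x))
    (hfq : IsQuasiIso dA dB f) (hf'q : IsQuasiIso dA' dB' f') :
    IsQuasiIso (coneDiff dA dA' g₁) (coneDiff dB dB' g₂) (coneMap f f' H) := by
  constructor
  · rintro ⟨y₁, y₂⟩ hy
    simp only [coneDiff_apply, Prod.mk_eq_zero] at hy
    obtain ⟨x₁, x₂, hx, w₁, w₂, hw₁, hw₂⟩ :=
      coneMap_surjective_on_homology hg₁ hg₂ hf' hH hfq hf'q hy.1 hy.2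
    exact ⟨(x₁, x₂), by simpa using hx, (w₁, w₂), by simp [hw₁, hw₂]⟩
  · rintro ⟨x₁, x₂⟩ hx ⟨⟨w₁, w₂⟩, hw⟩
    simp only [coneDiff_apply, coneMap_apply, Prod.mk_eq_zero, Prod.mk.injEq] at hx hw
    obtain ⟨v₁, v₂, hv₁, hv₂⟩ :=
      coneMap_injective_on_homology hg₁ hg₂ hf hH hfq hf'q hx.1 hx.2 hw.1 hw.2
    exact ⟨(v₁, v₂), by simp [hv₁, hv₂]⟩

end Cone

theorem R2.two_smul_eq_zero {M : Type} [AddCommGroup M] [Module R2 M] (m : M) :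
    (2 : R2) • m = 0 := by
  rw [show (2 : R2) = 0 from CharTwo.two_eq_zero, zero_smul]

theorem id_add_anticomm_of_comm {P : Type} [AddCommGroup P] [Module R2 P] {d τ : P →ₗ[R2] P}
    (hτ : τ ∘ₗ d = d ∘ₗ τ) (x : P) :
    (LinearMap.id + τ : P →ₗ[R2] P) (d x) = -d ((LinearMap.id + τ : P →ₗ[R2] P) x) := by
  have hτx : τ (d x) = d (τ x) := LinearMap.congr_fun hτ x
  simp only [LinearMap.add_apply, LinearMap.id_apply, map_add]
  linear_combination (norm := module) hτx + R2.two_smul_eq_zero (d x + d (τ x))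

theorem stmt0_general {M N : Type} [AddCommGroup M] [Module R2 M] [AddCommGroup N] [Module R2 N]
    (dM : M →ₗ[R2] M) (dN : N →ₗ[R2] N)
    (τ1 : M →ₗ[R2] M) (τ2 : N →ₗ[R2] N)
    (hτ1 : τ1 ∘ₗ dM = dM ∘ₗ τ1) (hτ2 : τ2 ∘ₗ dN = dN ∘ₗ τ2)
    (f : M →ₗ[R2] N) (hf : f ∘ₗ dM = dN ∘ₗ f)
    (hfq : IsQuasiIso dM dN f)
    (H : M →ₗ[R2] N)
    (hH : f ∘ₗ τ1 + τ2 ∘ₗ f = dN ∘ₗ H + H ∘ₗ dM) :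
    IsQuasiIso (coneD dM τ1) (coneD dN τ2)
      (LinearMap.prod (f ∘ₗ LinearMap.fst R2 M M)
        (f ∘ₗ LinearMap.snd R2 M M + H ∘ₗ LinearMap.fst R2 M M)) := by
  have hf' (x : M) : f (dM x) = dN (f x) := LinearMap.congr_fun hf x
  have hH' (x : M) : f ((LinearMap.id + τ1 : M →ₗ[R2] M) x) + H (dM x) =
      (LinearMap.id + τ2 : N →ₗ[R2] N) (f x) + dN (H x) := by
    have hHx : f (τ1 x) + τ2 (f x) = dN (H x) + H (dM x) := LinearMap.congr_fun hH x
    simp only [LinearMap.add_apply, LinearMap.id_apply, map_add]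
    linear_combination (norm := module) hHx + R2.two_smul_eq_zero (H (dM x)) -
      R2.two_smul_eq_zero (τ2 (f x))
  exact isQuasiIso_coneMap (id_add_anticomm_of_comm hτ1) (id_add_anticomm_of_comm hτ2)
    hf' hf' hH' hfq hfq

/-- If `f : C1 → C2` is a quasi-isomorphism of chain complexes of `F2[U]`-modules,
`τ1, τ2` are chain maps, and `f ∘ τ1 ≃ τ2 ∘ f` via a chain homotopy `H`, then the
induced map on the mapping cones `Cone(Q(id + τ1)) → Cone(Q(id + τ2))`, defined
using `f` on both factors and `H` on the off-diagonal, is a quasi-isomorphism. -/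
theorem stmt0 {M N : Type} [AddCommGroup M] [Module R2 M] [AddCommGroup N] [Module R2 N]
    (dM : M →ₗ[R2] M) (dN : N →ₗ[R2] N)
    (hdM : dM ∘ₗ dM = 0) (hdN : dN ∘ₗ dN = 0)
    (τ1 : M →ₗ[R2] M) (τ2 : N →ₗ[R2] N)
    (hτ1 : τ1 ∘ₗ dM = dM ∘ₗ τ1) (hτ2 : τ2 ∘ₗ dN = dN ∘ₗ τ2)
    (f : M →ₗ[R2] N) (hf : f ∘ₗ dM = dN ∘ₗ f)
    (hfq : IsQuasiIso dM dN f)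
    (H : M →ₗ[R2] N)
    (hH : f ∘ₗ τ1 + τ2 ∘ₗ f = dN ∘ₗ H + H ∘ₗ dM) :
    IsQuasiIso (coneD dM τ1) (coneD dN τ2)
      (LinearMap.prod (f ∘ₗ LinearMap.fst R2 M M)
        (f ∘ₗ LinearMap.snd R2 M M + H ∘ₗ LinearMap.fst R2 M M)) :=
  stmt0_general dM dN τ1 τ2 hτ1 hτ2 f hf hfq H hH
end

section
/- Let p ≥ 2 and let V be the F2-vector space with basis {a_1, …, a_p, e_1, …, e_p, x_0}. There is no F2-linear map τ : V → V satisfying all of the following: (1) τ(e_i) = e_i for all i; (2) for every j, τ(a_j) = a_j + x_0 + Σ_i n_i^j e_i for some coefficients n_i^j ∈ F2; (3) for every j, τ(τ(a_j)) = a_j + e_j; and (4) τ(x_0) lies in the span of {x_0, e_1, …, e_p}, with the coefficient of x_0 in τ(x_0) equal to 1. -/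
/-- The `F2`-vector space with basis `{a_1, …, a_p, e_1, …, e_p, x_0}`:
`a i` is indexed by `Sum.inl i`, `e i` by `Sum.inr (Sum.inl i)`, and `x_0` by
`Sum.inr (Sum.inr ())`. -/
abbrev Vsp (p : ℕ) : Type := (Fin p ⊕ Fin p ⊕ Unit) → ZMod 2

/-- The basis vector `a_j`. -/
def aGen (p : ℕ) (j : Fin p) : Vsp p := Pi.single (Sum.inl j) 1

/-- The basis vector `e_i`. -/
def eGen (p : ℕ) (i : Fin p) : Vsp p := Pi.single (Sum.inr (Sum.inl i)) 1

/-- The basis vector `x_0`. -/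
def x0Gen (p : ℕ) : Vsp p := Pi.single (Sum.inr (Sum.inr ())) 1

/-- For `p ≥ 2` there is no `F2`-linear `τ` with: `τ(e_i) = e_i`;
`τ(a_j) = a_j + x_0 + Σ_i n_i^j e_i`; `τ(τ(a_j)) = a_j + e_j`; and
`τ(x_0) ∈ span{x_0, e_1, …, e_p}` with `x_0`-coefficient `1`. -/
theorem stmt5 (p : ℕ) (hp : 2 ≤ p) :
    ¬ ∃ τ : Vsp p →ₗ[ZMod 2] Vsp p,
      (∀ i : Fin p, τ (eGen p i) = eGen p i) ∧
      (∀ j : Fin p, ∃ n : Fin p → ZMod 2,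
        τ (aGen p j) = aGen p j + x0Gen p + ∑ i : Fin p, n i • eGen p i) ∧
      (∀ j : Fin p, τ (τ (aGen p j)) = aGen p j + eGen p j) ∧
      (∃ c : Fin p → ZMod 2,
        τ (x0Gen p) = x0Gen p + ∑ i : Fin p, c i • eGen p i) := by
  rintro ⟨τ, he, ha, hsq, c, hx⟩
  have h2zero : (2 : Vsp p) = 0 := by funext x; rfl
  have key : ∀ j : Fin p, (∑ i : Fin p, c i • eGen p i) = eGen p j := by
    intro j
    obtain ⟨n, hn⟩ := ha j
    have h2 := hsq j
    rw [hn] at h2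
    simp only [map_add, map_sum, map_smul, he, hn, hx] at h2
    have h3 : aGen p j + (∑ i : Fin p, c i • eGen p i) = aGen p j + eGen p j := by
      rw [← h2]; ring_nf; rw [h2zero]; ring
    exact add_left_cancel h3
  have e0 := congrFun (key ⟨0, by omega⟩) (Sum.inr (Sum.inl ⟨0, by omega⟩))
  have e1 := congrFun (key ⟨1, by omega⟩) (Sum.inr (Sum.inl ⟨0, by omega⟩))
  simp only [Finset.sum_apply, Pi.smul_apply, eGen, Pi.single_apply, smul_eq_mul,
    Sum.inr.injEq, Sum.inl.injEq, mul_ite, mul_one, mul_zero,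
    Finset.sum_ite_eq, Finset.mem_univ, if_true, Fin.mk.injEq, Fin.ext_iff] at e0 e1
  norm_num at e1
  rw [e1] at e0
  exact one_ne_zero e0.symm
end
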